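/- Let β > −1, s₀ ∈ (0, min(1, R²)), p ≥ 1, μ₁ > 0, K > 0, α ≥ 2(p−1), and let μ : [0, R] → [0,∞) satisfy μ(s) ≤ μ₁ s^α. Suppose w ∈ C¹([0, s₀]) is nonnegative, non-decreasing, w(0) = 0, and w'(σ) ≤ K/σ for σ ∈ (0, s₀]. Then 2^{p−1} ∫₀^{s₀} (s₀ − s)^β ∫₀^s μ(√σ) w'(σ)^p dσ ds ≤ (2K)^{p−1} μ₁ ∫₀^{s₀} (s₀ − s)^β w(s) ds. -/

import Mathlib

/-!
As `w` is monotone, `w' ≥ 0`. For `0 < σ ≤ 1` the growth bound on `μ` and `w' σ ≤ K / σ` give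
`μ (√σ) * w' σ ^ p ≤ μ₁ σ^(α/2) (K/σ)^(p-1) w' σ = μ₁ K^(p-1) σ^(α/2 - (p-1)) w' σ ≤ μ₁ K^(p-1) w' σ`,
because `α / 2 ≥ p - 1`. Integrating and using `w 0 = 0`, the inner integral up to `s` is at most
`μ₁ K^(p-1) w s`; the outer weight `(s₀ - s)^β` is integrable as `β > -1`.
-/

open Set Real MeasureTheory intervalIntegral

open Filter Topology in
lemma HasDerivAt.nonneg_of_monotoneOn_of_mem_nhds {g : ℝ → ℝ} {g' x : ℝ} {s : Set ℝ}
    (hd : HasDerivAt g g' x) (hg : MonotoneOn g s) (hs : s ∈ 𝓝 x) : 0 ≤ g' :=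
  hd.hasDerivWithinAt.nonneg_of_monotoneOn
    (by simpa using (PerfectSpace.univ_preperfect x (mem_univ x)).nhds_inter hs) hg

lemma intervalIntegrable_sub_rpow {a b β : ℝ} (hβ : -1 < β) :
    IntervalIntegrable (fun x ↦ (b - x) ^ β) volume a b := by
  simpa using (intervalIntegrable_rpow' (a := b - a) (b := 0) hβ).comp_sub_left b

/-- The hypothesis `0 ≤ ∫ g` covers a non-integrable `f`, whose integral is the junk value `0`. -/
lemma integral_le_of_le_Ioo_of_integral_nonneg {f g : ℝ → ℝ} {a b : ℝ} (hab : a ≤ b)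
    (hg : IntervalIntegrable g volume a b) (hg0 : 0 ≤ ∫ x in a..b, g x)
    (h : ∀ x ∈ Ioo a b, f x ≤ g x) : ∫ x in a..b, f x ≤ ∫ x in a..b, g x := by
  by_cases hf : IntervalIntegrable f volume a b
  · exact integral_mono_on_of_le_Ioo hab hf hg h
  · rwa [integral_undef hf]

lemma mul_rpow_le_of_le_sqrt_rpow {m v σ μ₁ K α p : ℝ} (hσ : 0 < σ) (hσ1 : σ ≤ 1)
    (hp : 1 ≤ p) (hα : 2 * (p - 1) ≤ α) (hμ₁ : 0 ≤ μ₁) (hm : m ≤ μ₁ * √σ ^ α)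
    (hv : 0 ≤ v) (hvK : v ≤ K / σ) : m * v ^ p ≤ μ₁ * K ^ (p - 1) * v := by
  have hK : 0 ≤ K := (mul_nonneg hv hσ.le).trans ((le_div_iff₀ hσ).1 hvK)
  have hsqrt : √σ ^ α = σ ^ (α / 2) := by
    rw [sqrt_eq_rpow, ← rpow_mul hσ.le, one_div_mul_eq_div]
  calc m * v ^ p = m * (v ^ (p - 1) * v) := by
        rw [← rpow_add_one' hv (by linarith), sub_add_cancel]
    _ ≤ μ₁ * σ ^ (α / 2) * ((K / σ) ^ (p - 1) * v) := by
        rw [← hsqrt]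
        gcongr
    _ = μ₁ * K ^ (p - 1) * (σ ^ (α / 2 - (p - 1)) * v) := by
        rw [div_rpow hK hσ.le, rpow_sub hσ (α / 2)]
        ring
    _ ≤ μ₁ * K ^ (p - 1) * (1 * v) := by
        gcongr
        exact rpow_le_one hσ.le hσ1 (by linarith)
    _ = μ₁ * K ^ (p - 1) * v := by rw [one_mul]

lemma integral_mul_rpow_deriv_le {μ w w' : ℝ → ℝ} {s μ₁ K α p : ℝ} (hs : 0 ≤ s) (hs1 : s ≤ 1)
    (hp : 1 ≤ p) (hα : 2 * (p - 1) ≤ α) (hμ₁ : 0 ≤ μ₁) (hK : 0 ≤ K)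
    (hμ : ∀ σ ∈ Ioo 0 s, μ √σ ≤ μ₁ * √σ ^ α)
    (hd : ∀ σ ∈ Icc 0 s, HasDerivWithinAt w (w' σ) (Icc 0 s) σ)
    (hc : ContinuousOn w' (Icc 0 s)) (hmono : MonotoneOn w (Icc 0 s))
    (hws : ∀ σ ∈ Ioo 0 s, w' σ ≤ K / σ) (hw0 : w 0 = 0) (hwnonneg : 0 ≤ w s) :
    ∫ σ in 0..s, μ √σ * w' σ ^ p ≤ μ₁ * K ^ (p - 1) * w s := by
  have hd' : ∀ σ ∈ Ioo 0 s, HasDerivAt w (w' σ) σ := fun σ hσ ↦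
    (hd σ (Ioo_subset_Icc_self hσ)).hasDerivAt (Icc_mem_nhds hσ.1 hσ.2)
  have hw'int : IntervalIntegrable w' volume 0 s := hc.intervalIntegrable_of_Icc hs
  have hFTC : ∫ σ in 0..s, μ₁ * K ^ (p - 1) * w' σ = μ₁ * K ^ (p - 1) * w s := by
    rw [intervalIntegral.integral_const_mul, integral_eq_sub_of_hasDerivAt_of_le hs
      (fun x hx ↦ (hd x hx).continuousWithinAt) hd' hw'int, hw0, sub_zero]
  rw [← hFTC]
  refine integral_le_of_le_Ioo_of_integral_nonneg hs (hw'int.const_mul _)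
    (hFTC ▸ by positivity) fun σ hσ ↦ ?_
  have hw'σ : 0 ≤ w' σ :=
    (hd' σ hσ).nonneg_of_monotoneOn_of_mem_nhds hmono (Icc_mem_nhds hσ.1 hσ.2)
  exact mul_rpow_le_of_le_sqrt_rpow hσ.1 (hσ.2.le.trans hs1) hp hα hμ₁ (hμ σ hσ) hw'σ (hws σ hσ)

theorem nonlocal_term_estimate_general
    (R β s₀ p μ₁ K α : ℝ) (hR : 0 < R) (hβ : β > -1)
    (hs₀ : s₀ ∈ Ioo 0 (min 1 (R^2))) (hp : 1 ≤ p) (hμ₁ : 0 < μ₁) (hK : 0 < K)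
    (hα : α ≥ 2 * (p - 1))
    (μ : ℝ → ℝ)
    (hμ : ∀ s ∈ Icc 0 R, μ s ≤ μ₁ * s ^ α)
    (w w' : ℝ → ℝ)
    (hd : ∀ s ∈ Icc 0 s₀, HasDerivWithinAt w (w' s) (Icc 0 s₀) s)
    (hc : ContinuousOn w' (Icc 0 s₀))
    (hnonneg : ∀ s ∈ Icc 0 s₀, 0 ≤ w s)
    (hmono : MonotoneOn w (Icc 0 s₀))
    (hw0 : w 0 = 0)
    (hws : ∀ σ ∈ Ioc 0 s₀, w' σ ≤ K / σ) :
    2 ^ (p - 1) * ∫ s in (0:ℝ)..s₀, (s₀ - s) ^ β *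
        ∫ σ in (0:ℝ)..s, μ (Real.sqrt σ) * (w' σ) ^ p ≤
      (2 * K) ^ (p - 1) * μ₁ * ∫ s in (0:ℝ)..s₀, (s₀ - s) ^ β * w s := by
  obtain ⟨hs₀0, hs₀lt⟩ := hs₀
  have hs₀1 : s₀ ≤ 1 := (hs₀lt.trans_le (min_le_left _ _)).le
  have hs₀R : s₀ ≤ R ^ 2 := (hs₀lt.trans_le (min_le_right _ _)).le
  set C := μ₁ * K ^ (p - 1)
  have hinner : ∀ s ∈ Icc 0 s₀, ∫ σ in 0..s, μ √σ * w' σ ^ p ≤ C * w s := fun s hs ↦ by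
    have hsub : Icc 0 s ⊆ Icc 0 s₀ := Icc_subset_Icc_right hs.2
    refine integral_mul_rpow_deriv_le hs.1 (hs.2.trans hs₀1) hp hα hμ₁.le hK.le
      (fun σ hσ ↦ hμ _ ⟨sqrt_nonneg σ, (sqrt_le_left hR.le).2 (by linarith [hσ.2, hs.2])⟩)
      (fun σ hσ ↦ (hd σ (hsub hσ)).mono hsub) (hc.mono hsub) (hmono.mono hsub)
      (fun σ hσ ↦ hws σ ⟨hσ.1, hσ.2.le.trans hs.2⟩) hw0 (hnonneg s hs)
  have hweight : ∀ s ∈ Icc 0 s₀, 0 ≤ (s₀ - s) ^ β := fun s hs ↦ rpow_nonneg (by linarith [hs.2]) β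
  have hbound_int : IntervalIntegrable (fun s ↦ (s₀ - s) ^ β * (C * w s)) volume 0 s₀ :=
    (intervalIntegrable_sub_rpow hβ).mul_continuousOn <| continuousOn_const.mul fun x hx ↦
      (hd x (uIcc_of_le hs₀0.le ▸ hx)).continuousWithinAt.mono (uIcc_of_le hs₀0.le).subset
  calc 2 ^ (p - 1) * ∫ s in 0..s₀, (s₀ - s) ^ β * ∫ σ in 0..s, μ √σ * w' σ ^ p
      ≤ 2 ^ (p - 1) * ∫ s in 0..s₀, (s₀ - s) ^ β * (C * w s) := by
        gcongr
        refine integral_le_of_le_Ioo_of_integral_nonneg hs₀0.le hbound_int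
          (integral_nonneg hs₀0.le fun s hs ↦ ?_) fun s hs ↦ ?_
        · exact mul_nonneg (hweight s hs) (mul_nonneg (by positivity) (hnonneg s hs))
        · exact mul_le_mul_of_nonneg_left (hinner s (Ioo_subset_Icc_self hs))
            (hweight s (Ioo_subset_Icc_self hs))
    _ = (2 * K) ^ (p - 1) * μ₁ * ∫ s in 0..s₀, (s₀ - s) ^ β * w s := by
        simp only [mul_left_comm _ C, intervalIntegral.integral_const_mul]
        rw [mul_rpow zero_le_two hK.le]
        ring

theorem nonlocal_term_estimate
    (R β s₀ p μ₁ K α : ℝ) (hR : 0 < R) (hβ : β > -1)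
    (hs₀ : s₀ ∈ Ioo 0 (min 1 (R^2))) (hp : 1 ≤ p) (hμ₁ : 0 < μ₁) (hK : 0 < K)
    (hα : α ≥ 2 * (p - 1))
    (μ : ℝ → ℝ) (hμnn : ∀ s ∈ Icc 0 R, 0 ≤ μ s)
    (hμ : ∀ s ∈ Icc 0 R, μ s ≤ μ₁ * s ^ α)
    (w w' : ℝ → ℝ)
    (hd : ∀ s ∈ Icc 0 s₀, HasDerivWithinAt w (w' s) (Icc 0 s₀) s)
    (hc : ContinuousOn w' (Icc 0 s₀))
    (hnonneg : ∀ s ∈ Icc 0 s₀, 0 ≤ w s)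
    (hmono : MonotoneOn w (Icc 0 s₀))
    (hw0 : w 0 = 0)
    (hws : ∀ σ ∈ Ioc 0 s₀, w' σ ≤ K / σ) :
    2 ^ (p - 1) * ∫ s in (0:ℝ)..s₀, (s₀ - s) ^ β *
        ∫ σ in (0:ℝ)..s, μ (Real.sqrt σ) * (w' σ) ^ p ≤
      (2 * K) ^ (p - 1) * μ₁ * ∫ s in (0:ℝ)..s₀, (s₀ - s) ^ β * w s :=
  nonlocal_term_estimate_general R β s₀ p μ₁ K α hR hβ hs₀ hp hμ₁ hK hα μ hμ w w' hd hc hnonneg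
    hmono hw0 hws
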